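/- arXiv:2010.04942 — 2 statements merged into one kernel-verified Lean document; each statement's English description precedes it below -/
import Mathlib

section
/- For fixed s ∈ [0,1], the generating function φ_λ(s) = (μ+σ)/(μ+σ + (1−e^{(s−1)β₁/λ})λ + (1−s)β₀) converges to (μ+σ)/(μ+σ + (1−s)(β₀+β₁)) as λ → ∞. -/
open Filter Topology

/-! As `λ → ∞`, `λ (1 - e^{(s-1)β₁/λ})` is a difference quotient of `x ↦ e^{(s-1)β₁ x}` at `0`
with step `1/λ`, so it tends to `-(s-1)β₁ = (1-s)β₁`. The denominator of `φ_λ(s)` therefore tends to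
`μ + σ + (1-s)(β₀+β₁)`, which is positive, and the quotient converges. -/

theorem HasDerivAt.tendsto_mul_sub_inv_atTop {f : ℝ → ℝ} {f' x : ℝ} (h : HasDerivAt f f' x) :
    Tendsto (fun t => t * (f (x + t⁻¹) - f x)) atTop (𝓝 f') :=
  (h.tendsto_slope_zero_right.comp tendsto_inv_atTop_nhdsGT_zero).congr fun t => by
    simp

theorem tendsto_one_sub_exp_div_mul_atTop (c : ℝ) :
    Tendsto (fun t : ℝ => (1 - Real.exp (c / t)) * t) atTop (𝓝 (-c)) := by
  have hderiv : HasDerivAt (fun x => Real.exp (c * x)) c 0 := by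
    simpa using ((hasDerivAt_id (0 : ℝ)).const_mul c).exp
  refine hderiv.tendsto_mul_sub_inv_atTop.neg.congr fun t => ?_
  simp only [zero_add, mul_zero, Real.exp_zero, div_eq_mul_inv]
  ring

/-- For fixed `s ∈ [0,1]`, the generating function
`φ_λ(s) = (μ+σ)/(μ+σ + (1−e^{(s−1)β₁/λ})λ + (1−s)β₀)` converges to
`(μ+σ)/(μ+σ + (1−s)(β₀+β₁))` as `λ → ∞`. -/
theorem pgf_limit_lambda_infty (μ σ β₀ β₁ : ℝ)
    (hμσ : 0 < μ + σ) (hβ₀ : 0 ≤ β₀) (hβ₁ : 0 ≤ β₁)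
    (s : ℝ) (hs : s ∈ Set.Icc (0 : ℝ) 1) :
    Tendsto (fun lam : ℝ =>
        (μ + σ) /
          (μ + σ + (1 - Real.exp ((s - 1) * β₁ / lam)) * lam + (1 - s) * β₀))
      atTop (𝓝 ((μ + σ) / (μ + σ + (1 - s) * (β₀ + β₁)))) := by
  have hden : Tendsto (fun lam : ℝ =>
      μ + σ + (1 - Real.exp ((s - 1) * β₁ / lam)) * lam + (1 - s) * β₀) atTop
      (𝓝 (μ + σ + (1 - s) * (β₀ + β₁))) := by
    convert ((tendsto_one_sub_exp_div_mul_atTop ((s - 1) * β₁)).const_add (μ + σ)).add_const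
      ((1 - s) * β₀) using 2
    ring
  have hpos : 0 < μ + σ + (1 - s) * (β₀ + β₁) := by
    have : 0 ≤ (1 - s) * (β₀ + β₁) := mul_nonneg (by linarith [hs.2]) (by linarith)
    linarith
  exact tendsto_const_nhds.div hden hpos.ne'
end

section
/- Under the assumptions of the super-spreader branching model with age-dependent continuous rates β₀, β₁, μ, σ ≥ 0 and μ(a)+σ(a) ≥ ε > 0 for large a, the basic reproduction number satisfies R₀ = E[R_ind] = ∫₀^∞ (β₀(a)+β₁(a)) e^{−∫₀^a (μ(τ)+σ(τ))dτ} da, independent of the super-spreader event rate λ. -/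
/-!
Write `κ(a) = P(A > a)`, so that `κ' = -(μ + σ) κ`. Integrating by parts, the contact term
`∫₀^∞ (∫₀^a β₀) (μ + σ)(a) κ(a) da` becomes `∫₀^∞ β₀ κ`; the boundary term vanishes because
`μ + σ ≥ ε` eventually makes `κ(a) = O(e^{-εa})`, while `∫₀^a β₀ ≤ M a`. In the super-spreader
term the Gamma densities of the arrival times of the Poisson process sum to the constant rate `λ`
(the exponential series), so, the terms being nonnegative, the sum of integrals is `λ ∫₀^∞ β₁ κ`
and the factor `1/λ` cancels.
-/

open MeasureTheory Real Set Filter Topology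

noncomputable def survival (g : ℝ → ℝ) (a : ℝ) : ℝ := exp (-∫ τ in (0:ℝ)..a, g τ)

section Survival

variable {g : ℝ → ℝ}

lemma survival_pos (a : ℝ) : 0 < survival g a := exp_pos _

lemma hasDerivAt_survival (hg : Continuous g) (a : ℝ) :
    HasDerivAt (survival g) (-(g a * survival g a)) a := by
  exact ((hg.integral_hasStrictDerivAt 0 a).hasDerivAt.neg.exp).congr_deriv
    (by rw [survival]; simp only [Pi.neg_apply]; ring)

lemma continuous_survival (hg : Continuous g) : Continuous (survival g) :=
  continuous_iff_continuousAt.2 fun a => (hasDerivAt_survival hg a).continuousAt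

variable {ε abar : ℝ}

lemma mul_sub_le_integral (hg : Continuous g) (hg0 : ∀ a, 0 ≤ g a) (hε : 0 ≤ ε)
    (hrec : ∀ a, abar ≤ a → ε ≤ g a) {a : ℝ} (ha : 0 ≤ a) :
    ε * (a - max abar 0) ≤ ∫ τ in (0:ℝ)..a, g τ := by
  set b := max abar 0
  rcases le_total a b with hab | hba
  · have : 0 ≤ ∫ τ in (0:ℝ)..a, g τ := intervalIntegral.integral_nonneg ha fun x _ => hg0 x
    nlinarith
  · have head : 0 ≤ ∫ τ in (0:ℝ)..b, g τ :=
      intervalIntegral.integral_nonneg (le_max_right _ _) fun x _ => hg0 x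
    have tail : ∫ _ in b..a, ε ≤ ∫ τ in b..a, g τ :=
      intervalIntegral.integral_mono_on hba intervalIntegrable_const (hg.intervalIntegrable _ _)
        fun x hx => hrec x ((le_max_left _ _).trans hx.1)
    rw [intervalIntegral.integral_const, smul_eq_mul] at tail
    rw [← intervalIntegral.integral_add_adjacent_intervals (hg.intervalIntegrable 0 b)
      (hg.intervalIntegrable b a)]
    linarith

lemma survival_le_exp (hg : Continuous g) (hg0 : ∀ a, 0 ≤ g a) (hε : 0 ≤ ε)
    (hrec : ∀ a, abar ≤ a → ε ≤ g a) : ∃ C, ∀ a, 0 ≤ a → survival g a ≤ C * exp (-ε * a) := by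
  refine ⟨exp (ε * max abar 0), fun a ha => ?_⟩
  rw [survival, ← exp_add, exp_le_exp]
  linarith [mul_sub_le_integral hg hg0 hε hrec ha]

lemma integrableOn_mul_survival (hg : Continuous g) (hg0 : ∀ a, 0 ≤ g a) (hε : 0 < ε)
    (hrec : ∀ a, abar ≤ a → ε ≤ g a) {β : ℝ → ℝ} {M : ℝ} (hβ : Continuous β)
    (hβM : ∀ a, ‖β a‖ ≤ M) : IntegrableOn (fun a => β a * survival g a) (Ioi 0) := by
  obtain ⟨C, hC⟩ := survival_le_exp hg hg0 hε.le hrec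
  have hκ : IntegrableOn (survival g) (Ioi 0) := by
    refine ((exp_neg_integrableOn_Ioi 0 hε).const_mul C).mono'
      (continuous_survival hg).aestronglyMeasurable ?_
    filter_upwards [ae_restrict_mem measurableSet_Ioi] with a ha
    rw [Real.norm_of_nonneg (survival_pos a).le]
    exact hC a (le_of_lt ha)
  exact hκ.bdd_mul hβ.aestronglyMeasurable (ae_of_all _ hβM)

lemma tendsto_integral_mul_survival (hg : Continuous g) (hg0 : ∀ a, 0 ≤ g a) (hε : 0 < ε)
    (hrec : ∀ a, abar ≤ a → ε ≤ g a) {β : ℝ → ℝ} {M : ℝ} (hβM : ∀ a, ‖β a‖ ≤ M) :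
    Tendsto (fun a => (∫ τ in (0:ℝ)..a, β τ) * survival g a) atTop (𝓝 0) := by
  obtain ⟨C, hC⟩ := survival_le_exp hg hg0 hε.le hrec
  have hdecay := (tendsto_rpow_mul_exp_neg_mul_atTop_nhds_zero 1 ε hε).const_mul (M * C)
  rw [mul_zero] at hdecay
  refine squeeze_zero_norm' ?_ hdecay
  filter_upwards [eventually_ge_atTop 0] with a ha
  have hF : ‖∫ τ in (0:ℝ)..a, β τ‖ ≤ M * a := by
    simpa [abs_of_nonneg ha] using
      intervalIntegral.norm_integral_le_of_norm_le_const (a := 0) (b := a) fun x _ => hβM x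
  rw [norm_mul, Real.norm_of_nonneg (survival_pos a).le, rpow_one]
  calc ‖∫ τ in (0:ℝ)..a, β τ‖ * survival g a ≤ (M * a) * (C * exp (-ε * a)) :=
        mul_le_mul hF (hC a ha) (survival_pos a).le ((norm_nonneg _).trans hF)
    _ = M * C * (a * exp (-ε * a)) := by ring

end Survival

/-- Integration by parts `E[F(A)] = ∫ F' P(A > ·)` for a survival function `κ`, the nonnegativity
making `F · (-κ')` integrable. -/
lemma integral_Ioi_integral_mul_neg_deriv {f κ κ' : ℝ → ℝ} (hf : Continuous f)
    (hκ : ∀ a, HasDerivAt κ (κ' a) a) (hfκ : IntegrableOn (fun a => f a * κ a) (Ioi 0))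
    (hlim : Tendsto (fun a => (∫ τ in (0:ℝ)..a, f τ) * κ a) atTop (𝓝 0))
    (hnonneg : ∀ a ∈ Ioi (0:ℝ), 0 ≤ (∫ τ in (0:ℝ)..a, f τ) * -κ' a) :
    ∫ a in Ioi 0, (∫ τ in (0:ℝ)..a, f τ) * -κ' a = ∫ a in Ioi 0, f a * κ a := by
  have hκc : Continuous κ := continuous_iff_continuousAt.2 fun a => (hκ a).continuousAt
  have hderiv : ∀ a ∈ Ici (0:ℝ), HasDerivAt
      (fun x => (∫ τ in (0:ℝ)..x, f τ * κ τ) - (∫ τ in (0:ℝ)..x, f τ) * κ x)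
      ((∫ τ in (0:ℝ)..a, f τ) * -κ' a) a := fun a _ => by
    refine (((hf.mul hκc).integral_hasStrictDerivAt 0 a).hasDerivAt.sub
      ((hf.integral_hasStrictDerivAt 0 a).hasDerivAt.mul (hκ a))).congr_deriv ?_
    simp only [Pi.mul_apply]
    ring
  have hlim' := (intervalIntegral_tendsto_integral_Ioi 0 hfκ tendsto_id).sub hlim
  rw [sub_zero] at hlim'
  simpa using integral_Ioi_of_hasDerivAt_of_nonneg' hderiv hnonneg hlim'

/-- The `i`-th term is the (Erlang) density of the `(i+1)`-st arrival time of a rate-`lam` Poisson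
process. -/
lemma hasSum_erlang_density (lam t : ℝ) :
    HasSum (fun i : ℕ => lam * (lam * t) ^ i * exp (-lam * t) / i.factorial) lam := by
  have h := (NormedSpace.expSeries_div_hasSum_exp (lam * t)).mul_left (lam * exp (-lam * t))
  rw [← Real.exp_eq_exp_ℝ, mul_assoc, ← exp_add, neg_mul, neg_add_cancel, exp_zero, mul_one] at h
  exact h.congr_fun fun i => by rw [neg_mul]; ring

lemma hasSum_integral_of_nonneg {α ι : Type*} [Countable ι] [MeasurableSpace α] {μ : Measure α}
    {F : ι → α → ℝ} {f : α → ℝ} (hF : ∀ n, AEStronglyMeasurable (F n) μ)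
    (hF0 : ∀ n, 0 ≤ᵐ[μ] F n) (hf : Integrable f μ) (hsum : ∀ᵐ a ∂μ, HasSum (F · a) (f a)) :
    HasSum (fun n => ∫ a, F n a ∂μ) (∫ a, f a ∂μ) := by
  refine hasSum_integral_of_dominated_convergence F hF (fun n => ?_) (hsum.mono fun a h => h.summable)
    (hf.congr (hsum.mono fun a h => h.tsum_eq.symm)) hsum
  filter_upwards [hF0 n] with a ha
  rw [Real.norm_of_nonneg ha]

lemma tsum_integral_mul_erlang_density {h : ℝ → ℝ} {lam : ℝ} (hlam : 0 < lam)
    (hint : IntegrableOn h (Ioi 0)) (h0 : ∀ t ∈ Ioi (0:ℝ), 0 ≤ h t) :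
    ∑' i : ℕ, ∫ t in Ioi 0, h t * (lam * (lam * t) ^ i * exp (-lam * t) / i.factorial)
      = lam * ∫ t in Ioi 0, h t := by
  rw [← integral_const_mul]
  refine (hasSum_integral_of_nonneg (fun i => ?_) (fun i => ?_) (hint.const_mul lam)
    (ae_of_all _ fun t => ?_)).tsum_eq
  · exact hint.aestronglyMeasurable.mul (by fun_prop : Continuous _).aestronglyMeasurable
  · filter_upwards [ae_restrict_mem measurableSet_Ioi] with t (ht : 0 < t)
    have := h0 t ht
    positivity
  · simpa [mul_comm] using (hasSum_erlang_density lam t).mul_left (h t)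

/-- In the super-spreader branching model with age-dependent
continuous nonnegative bounded rates `β₀, β₁` and continuous nonnegative
`μ, σ` with `μ(a)+σ(a) ≥ ε > 0` for `a ≥ ā`, the expected number of secondary
cases `R₀ = E[R_ind]` decomposes as the deterministic-contact expectation
`E[Z(∫₀^A β₀)] = ∫₀^∞ (∫₀^a β₀)(μ(a)+σ(a))κ(a) da` (with `A` having survival
function `κ(a) = e^{−∫₀^a(μ+σ)}`) plus the super-spreader contribution
`(1/λ)Σ_{i} E[β₁(T_i)κ(T_i)]` over the Gamma-distributed arrival times, and
equals `∫₀^∞ (β₀(a)+β₁(a)) κ(a) da`, independently of the event rate `λ`. -/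
theorem R0_formula (lam : ℝ) (hlam : 0 < lam)
    (μ σ β₀ β₁ : ℝ → ℝ) (hμ : Continuous μ) (hσ : Continuous σ)
    (hμ0 : ∀ a, 0 ≤ μ a) (hσ0 : ∀ a, 0 ≤ σ a)
    (hβ₀ : Continuous β₀) (hβ₀0 : ∀ a, 0 ≤ β₀ a)
    (hβ₁ : Continuous β₁) (hβ₁0 : ∀ a, 0 ≤ β₁ a)
    (M : ℝ) (hβ₀bdd : ∀ a, β₀ a ≤ M) (hβ₁bdd : ∀ a, β₁ a ≤ M)
    (ε abar : ℝ) (hε : 0 < ε) (hrec : ∀ a, abar ≤ a → ε ≤ μ a + σ a)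
    (κ : ℝ → ℝ) (hκ : ∀ a, κ a = Real.exp (-∫ τ in (0:ℝ)..a, (μ τ + σ τ))) :
    (∫ a in Set.Ioi (0 : ℝ),
        (∫ τ in (0:ℝ)..a, β₀ τ) * ((μ a + σ a) * κ a))
      + (1 / lam) * (∑' i : ℕ,
          ∫ t in Set.Ioi (0 : ℝ), β₁ t * κ t *
            (lam * (lam * t) ^ i * Real.exp (-lam * t) / (Nat.factorial i)))
      = ∫ a in Set.Ioi (0 : ℝ), (β₀ a + β₁ a) * κ a := by
  have hg : Continuous fun a => μ a + σ a := hμ.add hσ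
  have hg0 : ∀ a, 0 ≤ μ a + σ a := fun a => add_nonneg (hμ0 a) (hσ0 a)
  obtain rfl : κ = survival fun a => μ a + σ a := funext hκ
  have hβ₀M : ∀ a, ‖β₀ a‖ ≤ M := fun a => by rw [Real.norm_of_nonneg (hβ₀0 a)]; exact hβ₀bdd a
  have hβ₁M : ∀ a, ‖β₁ a‖ ≤ M := fun a => by rw [Real.norm_of_nonneg (hβ₁0 a)]; exact hβ₁bdd a
  have int₀ := integrableOn_mul_survival hg hg0 hε hrec hβ₀ hβ₀M
  have int₁ := integrableOn_mul_survival hg hg0 hε hrec hβ₁ hβ₁M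
  have contact : ∫ a in Ioi 0, (∫ τ in (0:ℝ)..a, β₀ τ) * ((μ a + σ a) * survival (fun a => μ a + σ a) a)
      = ∫ a in Ioi 0, β₀ a * survival (fun a => μ a + σ a) a := by
    simpa using integral_Ioi_integral_mul_neg_deriv hβ₀ (hasDerivAt_survival hg) int₀
      (tendsto_integral_mul_survival hg hg0 hε hrec hβ₀M) fun a (ha : 0 < a) => by
        simpa using mul_nonneg (intervalIntegral.integral_nonneg ha.le fun x _ => hβ₀0 x)
          (mul_nonneg (hg0 a) (survival_pos a).le)
  have superspreader := tsum_integral_mul_erlang_density hlam int₁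
    fun t _ => mul_nonneg (hβ₁0 t) (survival_pos t).le
  rw [contact, superspreader, one_div, inv_mul_cancel_left₀ hlam.ne', ← integral_add int₀ int₁]
  exact setIntegral_congr_fun measurableSet_Ioi fun a _ => by ring
end
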